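/- arXiv:math/0702106 — 3 statements merged into one kernel-verified Lean document; each statement's English description precedes it below -/
import Mathlib

section
/- Let $n$ and $m$ be integers with $0 < m < n$. Then $\sum_{h/k} \sum_{s=1}^{\lfloor \min\{m/h,\,(n-m)/(k-h)\} \rfloor} \binom{m}{s h}\binom{n-m}{s(k-h)} = \sum_{h/k} \sum_{s=1}^{\lfloor \min\{(n-m)/h,\,m/(k-h)\} \rfloor} \binom{n-m}{s h}\binom{m}{s(k-h)} = 2^n - 2^m - 2^{n-m} + 1$, where the first outer sum ranges over all reduced fractions $h/k \in \mathcal{F}(\mathbb{B}(n),m)$ with $0/1 < h/k < 1/1$ and the second outer sum ranges over all reduced fractions $h/k \in \mathcal{F}(\mathbb{B}(n),n-m)$ with $0/1 < h/k < 1/1$. -/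
/-!
Every pair `(a, b)` of positive integers is uniquely `s • (h, d)` with `s = gcd a b` and `h, d`
coprime, and `(h, d)` corresponds to the reduced fraction `h / (h + d)`; the bounds `a ≤ m`,
`b ≤ n - m` become `s ≤ m / h`, `s ≤ (n - m) / d` and `h ≤ m`, `d ≤ n - m`. So each double sum
is `∑ a ∈ [1, m], ∑ b ∈ [1, n - m], C(m, a) C(n - m, b) = (2 ^ m - 1) (2 ^ (n - m) - 1)`.
-/

open Finset

theorem Nat.sum_Icc_one_choose (M : ℕ) : ∑ a ∈ Icc 1 M, M.choose a = 2 ^ M - 1 := by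
  have h := Nat.sum_range_choose M
  rw [Nat.range_succ_eq_Icc_zero, ← insert_Icc_add_one_left_eq_Icc M.zero_le,
    sum_insert (by simp), Nat.choose_zero_right, zero_add] at h
  omega

theorem two_pow_sub_one_mul_two_pow_sub_one {M N : ℕ} (hM : 0 < M) (hN : 0 < N) :
    (2 ^ M - 1) * (2 ^ N - 1) = 2 ^ (M + N) - 2 ^ M - 2 ^ N + 1 := by
  have hx : 1 ≤ 2 ^ M - 1 := by have := Nat.pow_le_pow_right two_pos hM; omega
  have hy : 1 ≤ 2 ^ N - 1 := by have := Nat.pow_le_pow_right two_pos hN; omega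
  have hxy : 2 ^ (M + N) = (2 ^ M - 1) * (2 ^ N - 1) + (2 ^ M - 1) + (2 ^ N - 1) + 1 := by
    obtain ⟨x, hx⟩ : ∃ x, 2 ^ M = x + 1 := ⟨_, (Nat.sub_add_cancel Nat.one_le_two_pow).symm⟩
    obtain ⟨y, hy⟩ : ∃ y, 2 ^ N = y + 1 := ⟨_, (Nat.sub_add_cancel Nat.one_le_two_pow).symm⟩
    rw [pow_add, hx, hy, Nat.add_sub_cancel, Nat.add_sub_cancel]
    ring
  have := Nat.mul_le_mul hx hy
  omega

/-- The pairs `(h, k)` of the fractions `h / k` of `𝓕(𝔹(M + N), M)` with `0 < h / k < 1`. -/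
def fareyB (M N : ℕ) : Finset (ℕ × ℕ) :=
  (Icc 1 (M + N) ×ˢ Icc 1 (M + N)).filter
    (fun p => p.1 < p.2 ∧ Nat.Coprime p.1 p.2 ∧ p.1 ≤ M ∧ p.2 - p.1 ≤ N)

section

variable {β : Type*} [AddCommMonoid β]

theorem sum_coprime_sum_multiples_eq_sum_product (M N : ℕ) (f : ℕ → ℕ → β) :
    ∑ p ∈ (Icc 1 M ×ˢ Icc 1 N).filter (fun p => Nat.Coprime p.1 p.2),
      ∑ s ∈ Icc 1 (min (M / p.1) (N / p.2)), f (s * p.1) (s * p.2)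
      = ∑ q ∈ Icc 1 M ×ˢ Icc 1 N, f q.1 q.2 := by
  rw [sum_sigma']
  refine sum_nbij' (fun x => (x.2 * x.1.1, x.2 * x.1.2))
    (fun q => ⟨(q.1 / q.1.gcd q.2, q.2 / q.1.gcd q.2), q.1.gcd q.2⟩) ?_ ?_ ?_ ?_ (fun _ _ => rfl)
  · rintro ⟨⟨h, d⟩, s⟩ hx
    simp only [mem_sigma, mem_filter, mem_product, mem_Icc, le_min_iff] at hx ⊢
    obtain ⟨⟨⟨⟨h1, -⟩, d1, -⟩, -⟩, s1, hsM, hsN⟩ := hx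
    rw [Nat.le_div_iff_mul_le h1] at hsM
    rw [Nat.le_div_iff_mul_le d1] at hsN
    exact ⟨⟨Nat.mul_pos s1 h1, hsM⟩, Nat.mul_pos s1 d1, hsN⟩
  · rintro ⟨a, b⟩ hq
    simp only [mem_sigma, mem_filter, mem_product, mem_Icc, le_min_iff] at hq ⊢
    obtain ⟨⟨a1, aM⟩, b1, bN⟩ := hq
    have hg : 0 < a.gcd b := Nat.gcd_pos_of_pos_left b a1
    have ha : 0 < a / a.gcd b := Nat.div_pos (Nat.gcd_le_left b a1) hg
    have hb : 0 < b / a.gcd b := Nat.div_pos (Nat.gcd_le_right (m := a) b1) hg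
    rw [Nat.le_div_iff_mul_le ha, Nat.le_div_iff_mul_le hb,
      Nat.mul_div_cancel' (Nat.gcd_dvd_left a b), Nat.mul_div_cancel' (Nat.gcd_dvd_right a b)]
    exact ⟨⟨⟨⟨ha, (Nat.div_le_self a _).trans aM⟩, hb, (Nat.div_le_self b _).trans bN⟩,
      Nat.coprime_div_gcd_div_gcd hg⟩, hg, aM, bN⟩
  · rintro ⟨⟨h, d⟩, s⟩ hx
    simp only [mem_sigma, mem_filter, mem_product, mem_Icc] at hx
    have hs : (s * h).gcd (s * d) = s := by rw [Nat.gcd_mul_left, hx.1.2.gcd_eq_one, mul_one]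
    simp only [hs, Nat.mul_div_cancel_left _ hx.2.1]
  · rintro ⟨a, b⟩ -
    rw [Nat.mul_div_cancel' (Nat.gcd_dvd_left a b), Nat.mul_div_cancel' (Nat.gcd_dvd_right a b)]

theorem sum_fareyB_eq_sum_coprime (M N : ℕ) (F : ℕ → ℕ → β) :
    ∑ p ∈ fareyB M N, F p.1 (p.2 - p.1)
      = ∑ q ∈ (Icc 1 M ×ˢ Icc 1 N).filter (fun q => Nat.Coprime q.1 q.2), F q.1 q.2 := by
  refine sum_nbij' (fun p => (p.1, p.2 - p.1)) (fun q => (q.1, q.1 + q.2)) ?_ ?_ ?_ ?_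
    (fun _ _ => rfl)
  · rintro ⟨h, k⟩ hp
    simp only [fareyB, mem_filter, mem_product, mem_Icc] at hp ⊢
    obtain ⟨⟨⟨h1, -⟩, -⟩, hk, hcop, hM, hN⟩ := hp
    exact ⟨⟨⟨h1, hM⟩, by omega, hN⟩, (Nat.coprime_sub_self_right hk.le).mpr hcop⟩
  · rintro ⟨h, d⟩ hq
    simp only [fareyB, mem_filter, mem_product, mem_Icc] at hq ⊢
    obtain ⟨⟨⟨h1, hM⟩, d1, dN⟩, hcop⟩ := hq
    exact ⟨⟨⟨h1, by omega⟩, by omega, by omega⟩, by omega, Nat.coprime_self_add_right.mpr hcop,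
      hM, by omega⟩
  · rintro ⟨h, k⟩ hp
    simp only [fareyB, mem_filter] at hp
    simp only [Prod.mk.injEq, true_and]
    omega
  · rintro ⟨h, d⟩ -
    simp

theorem sum_fareyB_sum_multiples_eq_sum_Icc (M N : ℕ) (f : ℕ → ℕ → β) :
    ∑ p ∈ fareyB M N, ∑ s ∈ Icc 1 (min (M / p.1) (N / (p.2 - p.1))),
      f (s * p.1) (s * (p.2 - p.1)) = ∑ a ∈ Icc 1 M, ∑ b ∈ Icc 1 N, f a b :=
  (sum_fareyB_eq_sum_coprime M N fun h d =>
      ∑ s ∈ Icc 1 (min (M / h) (N / d)), f (s * h) (s * d)).trans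
    ((sum_coprime_sum_multiples_eq_sum_product M N f).trans (sum_product _ _ _))

end

theorem sum_fareyB_choose_mul_choose {M N : ℕ} (hM : 0 < M) (hN : 0 < N) :
    ∑ p ∈ fareyB M N, ∑ s ∈ Icc 1 (min (M / p.1) (N / (p.2 - p.1))),
      M.choose (s * p.1) * N.choose (s * (p.2 - p.1)) = 2 ^ (M + N) - 2 ^ M - 2 ^ N + 1 := by
  rw [sum_fareyB_sum_multiples_eq_sum_Icc M N fun a b => M.choose a * N.choose b, ← sum_mul_sum,
    Nat.sum_Icc_one_choose, Nat.sum_Icc_one_choose, two_pow_sub_one_mul_two_pow_sub_one hM hN]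

/-- Identity for fractions of the Farey subsequences `𝓕(𝔹(n), m)` and `𝓕(𝔹(n), n-m)`.
The outer sums range over reduced fractions `h/k` (coprime pairs, `0 < h/k < 1`, `k ≤ n`)
with `h ≤ m`, `k - h ≤ n - m` (resp. `h ≤ n - m`, `k - h ≤ m`). -/
theorem fareyB_binomial_identity (n m : ℕ) (hm : 0 < m) (hmn : m < n) :
    (∑ p ∈ (Finset.Icc 1 n ×ˢ Finset.Icc 1 n).filter
        (fun p => p.1 < p.2 ∧ Nat.Coprime p.1 p.2 ∧ p.1 ≤ m ∧ p.2 - p.1 ≤ n - m),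
      ∑ s ∈ Finset.Icc 1 (min (m / p.1) ((n - m) / (p.2 - p.1))),
        (m.choose (s * p.1)) * ((n - m).choose (s * (p.2 - p.1)))
      = 2 ^ n - 2 ^ m - 2 ^ (n - m) + 1) ∧
    (∑ p ∈ (Finset.Icc 1 n ×ˢ Finset.Icc 1 n).filter
        (fun p => p.1 < p.2 ∧ Nat.Coprime p.1 p.2 ∧ p.1 ≤ n - m ∧ p.2 - p.1 ≤ m),
      ∑ s ∈ Finset.Icc 1 (min ((n - m) / p.1) (m / (p.2 - p.1))),
        ((n - m).choose (s * p.1)) * (m.choose (s * (p.2 - p.1)))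
      = 2 ^ n - 2 ^ m - 2 ^ (n - m) + 1) := by
  obtain ⟨N, rfl⟩ := Nat.exists_eq_add_of_le hmn.le
  have hN : 0 < N := by omega
  rw [Nat.add_sub_cancel_left]
  refine ⟨sum_fareyB_choose_mul_choose hm hN, ?_⟩
  rw [add_comm m N, Nat.sub_right_comm]
  exact sum_fareyB_choose_mul_choose hN hm
end

section
/- Let $m > 1$ be an integer. The map sending a fraction $h/k$ to $h/(k-h)$ (i.e., sending a rational $q$ to $q/(1-q)$) is an order-preserving bijection from the left halfsequence $\mathcal{F}^{\le 1/2}(\mathbb{B}(2m),m)$ onto the Farey sequence $\mathcal{F}_m$. -/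
lemma key (q : ℚ) (h0 : 0 ≤ q) (h1 : q < 1) :
    (q / (1 - q)).num = q.num ∧ ((q / (1 - q)).den : ℤ) = (q.den : ℤ) - q.num := by
  have hnum : 0 ≤ q.num := Rat.num_nonneg.mpr h0
  have hd : ((q.den : ℚ)) ≠ 0 := Nat.cast_ne_zero.mpr q.den_nz
  have hqd : q * (q.den : ℚ) = (q.num : ℚ) := by
    rw [(div_eq_iff hd).mp (Rat.num_div_den q), mul_comm]
  have hlt : q.num < (q.den : ℤ) := by
    by_contra h
    push_neg at h
    have : (q.den : ℚ) ≤ (q.num : ℚ) := by exact_mod_cast h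
    have hd0 : (0:ℚ) < (q.den : ℚ) := by exact_mod_cast q.pos
    nlinarith
  have hb : (0 : ℤ) < (q.den : ℤ) - q.num := by omega
  have heq : q / (1 - q) = (q.num : ℚ) / (((q.den : ℤ) - q.num : ℤ) : ℚ) := by
    have h1q : (1:ℚ) - q ≠ 0 := by linarith
    have hb' : (((q.den : ℤ) - q.num : ℤ) : ℚ) ≠ 0 := by exact_mod_cast hb.ne'
    rw [div_eq_div_iff h1q hb']
    push_cast
    linear_combination hqd
  have hcop : Nat.Coprime q.num.natAbs ((q.den : ℤ) - q.num).natAbs := by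
    have e1 : ((q.den : ℤ) - q.num).natAbs = q.den - q.num.natAbs := by omega
    have h2 : q.num.natAbs ≤ q.den := by omega
    rw [e1]
    exact (Nat.coprime_sub_self_right h2).mpr q.reduced
  rw [heq]
  exact ⟨Rat.num_div_eq_of_coprime hb hcop, Rat.den_div_eq_of_coprime hb hcop⟩

lemma key2 (p : ℚ) (h0 : 0 ≤ p) :
    (p / (1 + p)).num = p.num ∧ ((p / (1 + p)).den : ℤ) = (p.den : ℤ) + p.num := by
  have hnum : 0 ≤ p.num := Rat.num_nonneg.mpr h0
  have hd : ((p.den : ℚ)) ≠ 0 := Nat.cast_ne_zero.mpr p.den_nz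
  have hqd : p * (p.den : ℚ) = (p.num : ℚ) := by
    rw [(div_eq_iff hd).mp (Rat.num_div_den p), mul_comm]
  have hb : (0 : ℤ) < (p.den : ℤ) + p.num := by
    have := p.pos; omega
  have heq : p / (1 + p) = (p.num : ℚ) / (((p.den : ℤ) + p.num : ℤ) : ℚ) := by
    have h1p : (1:ℚ) + p ≠ 0 := by positivity
    have hb' : (((p.den : ℤ) + p.num : ℤ) : ℚ) ≠ 0 := by exact_mod_cast hb.ne'
    rw [div_eq_div_iff h1p hb']
    push_cast
    linear_combination hqd
  have hcop : Nat.Coprime p.num.natAbs ((p.den : ℤ) + p.num).natAbs := by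
    have e1 : ((p.den : ℤ) + p.num).natAbs = p.den + p.num.natAbs := by omega
    rw [e1]
    exact (Nat.coprime_add_self_right).mpr p.reduced
  rw [heq]
  exact ⟨Rat.num_div_eq_of_coprime hb hcop, Rat.den_div_eq_of_coprime hb hcop⟩


/-- The Farey sequence `𝓕_m`: rationals `q` with `0 ≤ q ≤ 1` whose reduced
denominator is at most `m`. -/
def fareySeq (m : ℕ) : Set ℚ := {q : ℚ | 0 ≤ q ∧ q ≤ 1 ∧ q.den ≤ m}

/-- The Farey subsequence `𝓕(𝔹(2m), m)`: rationals `q` with `0 ≤ q ≤ 1` whose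
reduced fraction `h/k` satisfies `k ≤ 2m`, `h ≤ m` and `k - h ≤ m`. -/
def fareyB2 (m : ℕ) : Set ℚ :=
  {q : ℚ | 0 ≤ q ∧ q ≤ 1 ∧ q.den ≤ 2 * m ∧ q.num ≤ (m : ℤ) ∧
    (q.den : ℤ) - q.num ≤ (m : ℤ)}

/-- The left halfsequence `𝓕^{≤1/2}(𝔹(2m), m)`. -/
def fareyB2Left (m : ℕ) : Set ℚ := {q ∈ fareyB2 m | q ≤ 1 / 2}

/-- The map `q ↦ q/(1-q)` (i.e. `h/k ↦ h/(k-h)`) is an order-preserving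
bijection from `𝓕^{≤1/2}(𝔹(2m), m)` onto `𝓕_m`. -/
theorem fareyB2Left_to_fareySeq_bijection (m : ℕ) (hm : 1 < m) :
    Set.BijOn (fun q : ℚ => q / (1 - q)) (fareyB2Left m) (fareySeq m) ∧
    StrictMonoOn (fun q : ℚ => q / (1 - q)) (fareyB2Left m) := by
  have hmono : StrictMonoOn (fun q : ℚ => q / (1 - q)) (fareyB2Left m) := by
    intro a ha b hb hab
    obtain ⟨⟨ha0, -, -⟩, ha2⟩ := ha
    obtain ⟨⟨hb0, -, -⟩, hb2⟩ := hb
    have h1a : (0:ℚ) < 1 - a := by linarith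
    have h1b : (0:ℚ) < 1 - b := by linarith
    simp only
    rw [div_lt_div_iff₀ h1a h1b]
    nlinarith
  refine ⟨⟨?_, hmono.injOn, ?_⟩, hmono⟩
  · -- MapsTo
    intro q hq
    obtain ⟨⟨h0, h1, hden, hnum, hdn⟩, hhalf⟩ := hq
    have hlt1 : q < 1 := lt_of_le_of_lt hhalf (by norm_num)
    obtain ⟨hn, hd⟩ := key q h0 hlt1
    have h1q : (0:ℚ) < 1 - q := by linarith
    refine ⟨div_nonneg h0 h1q.le, ?_, ?_⟩
    · rw [div_le_one h1q]; linarith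
    · have : ((q / (1 - q)).den : ℤ) ≤ (m : ℤ) := by rw [hd]; exact hdn
      exact_mod_cast this
  · -- SurjOn
    intro p hp
    obtain ⟨h0, h1, hden⟩ := hp
    have hnum : 0 ≤ p.num := Rat.num_nonneg.mpr h0
    have hd : ((p.den : ℚ)) ≠ 0 := Nat.cast_ne_zero.mpr p.den_nz
    have hqd : p * (p.den : ℚ) = (p.num : ℚ) := by
      rw [(div_eq_iff hd).mp (Rat.num_div_den p), mul_comm]
    have hnd : p.num ≤ (p.den : ℤ) := by
      have hd0 : (0:ℚ) < (p.den : ℚ) := by exact_mod_cast p.pos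
      have : (p.num : ℚ) ≤ (p.den : ℚ) := by nlinarith
      exact_mod_cast this
    set q := p / (1 + p) with hqdef
    have h1p : (0:ℚ) < 1 + p := by linarith
    have hq0 : 0 ≤ q := div_nonneg h0 h1p.le
    have hqhalf : q ≤ 1 / 2 := by
      rw [hqdef, div_le_div_iff₀ h1p (by norm_num)]
      linarith
    have hq1 : q ≤ 1 := le_trans hqhalf (by norm_num)
    obtain ⟨hn2, hd2⟩ := key2 p h0
    rw [← hqdef] at hn2 hd2
    have hdm : (p.den : ℤ) ≤ (m : ℤ) := by exact_mod_cast hden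
    refine ⟨q, ⟨⟨hq0, hq1, ?_, ?_, ?_⟩, hqhalf⟩, ?_⟩
    · have : ((q.den : ℤ)) ≤ 2 * (m : ℤ) := by rw [hd2]; omega
      exact_mod_cast this
    · rw [hn2]; omega
    · rw [hd2, hn2]; omega
    · show q / (1 - q) = p
      have h1q : (1:ℚ) - q ≠ 0 := by
        have : q < 1 := lt_of_le_of_lt hqhalf (by norm_num)
        linarith
      rw [div_eq_iff h1q, hqdef]
      field_simp
      ring
end

section
/- Let $m > 1$ be an integer. Then $\sum_{h/k:\, 0/1 < h/k < 1/2} \sum_{s=1}^{\lfloor m/k \rfloor} \binom{m}{s k}\left(\binom{m}{s h} + \binom{m}{s(k-h)}\right) = \sum_{h/k:\, 1/2 < h/k < 1/1} \sum_{s=1}^{\lfloor m/k \rfloor} \binom{m}{s k}\left(\binom{m}{s h} + \binom{m}{s(k-h)}\right) = 2^{2m-1} - 2^m - \tfrac{1}{2}\binom{2m}{m} - \sum_{t=1}^{\lfloor m/2 \rfloor} \binom{m}{2t}\binom{m}{t} + 1$, where the outer sums range over all reduced fractions $h/k \in \mathcal{F}_m$ in the indicated open intervals. -/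
/-!
Writing every pair `1 ≤ a < b ≤ m` uniquely as `s • (h, k)` with `h/k` reduced (`s = gcd a b`),
the inner sums over all fractions of `𝓕_m` in `(0, 1)` add up to
`∑_{1 ≤ a < b ≤ m} C(m,b) (C(m,a) + C(m,b-a)) = 2 ∑_{1 ≤ a < b ≤ m} C(m,a) C(m,b)`.
Squaring `∑_{a=1}^m C(m,a) = 2^m - 1` and using `∑_{a=1}^m C(m,a)^2 = C(2m,m) - 1` evaluates
this as `2^{2m} - 2^{m+1} + 2 - C(2m,m)`. The reflection `h/k ↦ 1 - h/k` preserves the inner sum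
and exchanges the two halves, while `1/2` contributes `2 ∑_t C(m,2t) C(m,t)`.
-/

open Finset

theorem Finset.sq_sum_eq_sum_sq_add_two_mul_sum_lt {α R : Type*} [LinearOrder α]
    [CommSemiring R] (s : Finset α) (f : α → R) :
    (∑ i ∈ s, f i) ^ 2 = ∑ i ∈ s, f i ^ 2 + 2 * ∑ q ∈ s ×ˢ s with q.1 < q.2, f q.1 * f q.2 := by
  have hswap : ∑ q ∈ s ×ˢ s with q.2 < q.1, f q.1 * f q.2 =
      ∑ q ∈ s ×ˢ s with q.1 < q.2, f q.1 * f q.2 :=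
    sum_nbij' Prod.swap Prod.swap (by simp +contextual) (by simp +contextual) (by simp) (by simp)
      (fun q _ => mul_comm _ _)
  have hdiag : ∑ q ∈ s ×ˢ s with q.1 = q.2, f q.1 * f q.2 = ∑ i ∈ s, f i ^ 2 := by
    simp [sum_filter, sum_product, sq]
  have hsplit : (s ×ˢ s).filter (fun q => ¬ q.1 < q.2) =
      (s ×ˢ s).filter (fun q => q.1 = q.2) ∪ (s ×ˢ s).filter (fun q => q.2 < q.1) := by
    ext q
    simp only [mem_filter, mem_union]
    grind
  have hdisj : Disjoint ((s ×ˢ s).filter (fun q => q.1 = q.2))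
      ((s ×ˢ s).filter (fun q => q.2 < q.1)) := by
    rw [disjoint_filter]
    grind
  rw [sq, sum_mul_sum, ← sum_product', ← sum_filter_add_sum_filter_not _ (fun q => q.1 < q.2),
    hsplit, sum_union hdisj, hdiag, hswap]
  ring

theorem Finset.sum_range_succ_eq_add_sum_Icc {M : Type*} [AddCommMonoid M] (f : ℕ → M) (n : ℕ) :
    ∑ i ∈ range (n + 1), f i = f 0 + ∑ i ∈ Icc 1 n, f i := by
  rw [range_eq_Ico, sum_eq_sum_Ico_succ_bot (by omega : 0 < n + 1), zero_add,
    Ico_add_one_right_eq_Icc]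

def ltPairs (m : ℕ) : Finset (ℕ × ℕ) := (Icc 1 m ×ˢ Icc 1 m).filter fun q => q.1 < q.2

/-- The fractions `h/k ∈ 𝓕_m` with `0 < h/k < 1`, as pairs `(h, k)`. -/
def fareyInterior (m : ℕ) : Finset (ℕ × ℕ) := (ltPairs m).filter fun p => p.1.Coprime p.2

def fareyLowerHalf (m : ℕ) : Finset (ℕ × ℕ) :=
  (Icc 1 m ×ˢ Icc 1 m).filter fun p => 2 * p.1 < p.2 ∧ p.1.Coprime p.2

def fareyUpperHalf (m : ℕ) : Finset (ℕ × ℕ) :=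
  (Icc 1 m ×ˢ Icc 1 m).filter fun p => p.2 < 2 * p.1 ∧ p.1 < p.2 ∧ p.1.Coprime p.2

theorem sum_ltPairs_sub_fst {M : Type*} [AddCommMonoid M] (m : ℕ) (g : ℕ → ℕ → M) :
    ∑ q ∈ ltPairs m, g (q.2 - q.1) q.2 = ∑ q ∈ ltPairs m, g q.1 q.2 := by
  refine sum_nbij' (fun q => (q.2 - q.1, q.2)) (fun q => (q.2 - q.1, q.2)) ?_ ?_ ?_ ?_
    (fun _ _ => rfl)
  all_goals
    simp only [ltPairs, mem_filter, mem_product, mem_Icc, Prod.forall, Prod.mk.injEq,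
      and_true]
    omega

theorem sum_fareyInterior_sum_multiples {M : Type*} [AddCommMonoid M] (m : ℕ)
    (g : ℕ → ℕ → M) :
    ∑ p ∈ fareyInterior m, ∑ s ∈ Icc 1 (m / p.2), g (s * p.1) (s * p.2) =
      ∑ q ∈ ltPairs m, g q.1 q.2 := by
  rw [sum_sigma']
  refine sum_nbij' (fun x => (x.2 * x.1.1, x.2 * x.1.2))
    (fun q => ⟨(q.1 / q.1.gcd q.2, q.2 / q.1.gcd q.2), q.1.gcd q.2⟩) ?_ ?_ ?_ ?_
    (fun _ _ => rfl)
  all_goals simp only [fareyInterior, ltPairs, mem_sigma, mem_filter, mem_product,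
    mem_Icc, Sigma.forall, Prod.forall, Prod.mk.injEq, Sigma.mk.injEq, heq_eq_eq]
  · rintro h k s ⟨⟨⟨⟨⟨hh1, -⟩, hk1, -⟩, hhk⟩, -⟩, hs1, hsk⟩
    rw [Nat.le_div_iff_mul_le (by omega)] at hsk
    exact ⟨⟨⟨Nat.mul_pos hs1 hh1, by nlinarith⟩, Nat.mul_pos hs1 hk1, hsk⟩,
      Nat.mul_lt_mul_of_pos_left hhk hs1⟩
  · rintro a b ⟨⟨⟨ha1, ham⟩, hb1, hbm⟩, hab⟩
    have hd : 0 < a.gcd b := Nat.gcd_pos_of_pos_left b ha1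
    have hdb : a.gcd b ∣ b := Nat.gcd_dvd_right a b
    have hkpos : 0 < b / a.gcd b := Nat.div_pos (Nat.le_of_dvd (by omega) hdb) hd
    refine ⟨⟨⟨⟨⟨Nat.div_pos (Nat.gcd_le_left b ha1) hd, (Nat.div_le_self a _).trans ham⟩,
      hkpos, (Nat.div_le_self b _).trans hbm⟩, Nat.div_lt_div_of_lt_of_dvd hdb hab⟩,
      Nat.coprime_div_gcd_div_gcd hd⟩, hd, ?_⟩
    rw [Nat.le_div_iff_mul_le hkpos, Nat.mul_div_cancel' hdb]
    exact hbm
  · rintro h k s ⟨⟨-, hcop⟩, hs1, -⟩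
    have hgcd : (s * h).gcd (s * k) = s := by rw [Nat.gcd_mul_left, hcop.gcd_eq_one, mul_one]
    simp only [hgcd, Nat.mul_div_cancel_left _ hs1, and_self]
  · exact fun a b _ =>
      ⟨Nat.mul_div_cancel' (Nat.gcd_dvd_left a b), Nat.mul_div_cancel' (Nat.gcd_dvd_right a b)⟩

theorem sum_fareyUpperHalf_eq_sum_fareyLowerHalf {M : Type*} [AddCommMonoid M] (m : ℕ)
    (f : ℕ × ℕ → M) (hf : ∀ h k, h ≤ k → f (k - h, k) = f (h, k)) :
    ∑ p ∈ fareyUpperHalf m, f p = ∑ p ∈ fareyLowerHalf m, f p := by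
  refine sum_nbij' (fun p => (p.2 - p.1, p.2)) (fun p => (p.2 - p.1, p.2)) ?_ ?_ ?_ ?_ ?_
  all_goals simp only [fareyUpperHalf, fareyLowerHalf, mem_filter, mem_product, mem_Icc,
    Prod.forall, Prod.mk.injEq, and_true]
  · rintro h k ⟨⟨-, hk1, hkm⟩, hup, hlt, hcop⟩
    exact ⟨⟨⟨by omega, by omega⟩, hk1, hkm⟩, by omega,
      (Nat.coprime_self_sub_left hlt.le).2 hcop⟩
  · rintro h k ⟨⟨⟨hh1, -⟩, hk1, hkm⟩, hlo, hcop⟩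
    exact ⟨⟨⟨by omega, by omega⟩, hk1, hkm⟩, by omega, by omega,
      (Nat.coprime_self_sub_left (by omega)).2 hcop⟩
  · intro h k hp
    omega
  · intro h k hp
    omega
  · intro h k hp
    exact (hf h k (by omega)).symm

theorem fareyInterior_eq_insert_union {m : ℕ} (hm : 2 ≤ m) :
    fareyInterior m = insert (1, 2) (fareyLowerHalf m ∪ fareyUpperHalf m) := by
  ext ⟨h, k⟩
  simp only [fareyInterior, ltPairs, fareyLowerHalf, fareyUpperHalf, mem_insert, mem_union,
    mem_filter, mem_product, mem_Icc, Prod.mk.injEq]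
  constructor
  · rintro ⟨⟨⟨hh, hk⟩, hhk⟩, hcop⟩
    rcases lt_trichotomy (2 * h) k with hlo | rfl | hup
    · exact Or.inr (Or.inl ⟨⟨hh, hk⟩, hlo, hcop⟩)
    · have := hcop.eq_one_of_dvd (dvd_mul_left h 2)
      exact Or.inl ⟨this, by omega⟩
    · exact Or.inr (Or.inr ⟨⟨hh, hk⟩, hup, hhk, hcop⟩)
  · rintro (⟨rfl, rfl⟩ | ⟨⟨hh, hk⟩, hlo, hcop⟩ | ⟨⟨hh, hk⟩, -, hhk, hcop⟩)
    · exact ⟨⟨⟨⟨le_rfl, by omega⟩, by omega, hm⟩, by omega⟩, Nat.coprime_one_left 2⟩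
    · exact ⟨⟨⟨hh, hk⟩, by omega⟩, hcop⟩
    · exact ⟨⟨⟨hh, hk⟩, hhk⟩, hcop⟩

theorem sum_fareyInterior {M : Type*} [AddCommMonoid M] {m : ℕ} (hm : 2 ≤ m)
    (f : ℕ × ℕ → M) :
    ∑ p ∈ fareyInterior m, f p =
      f (1, 2) + (∑ p ∈ fareyLowerHalf m, f p + ∑ p ∈ fareyUpperHalf m, f p) := by
  rw [fareyInterior_eq_insert_union hm, sum_insert, sum_union]
  · exact disjoint_filter.2 fun p _ hlo hup => by omega
  · simp [fareyLowerHalf, fareyUpperHalf]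

def fareyTerm (m : ℕ) (p : ℕ × ℕ) : ℕ :=
  ∑ s ∈ Icc 1 (m / p.2),
    m.choose (s * p.2) * (m.choose (s * p.1) + m.choose (s * (p.2 - p.1)))

theorem fareyTerm_sub_fst (m : ℕ) {h k : ℕ} (hhk : h ≤ k) :
    fareyTerm m (k - h, k) = fareyTerm m (h, k) := by
  unfold fareyTerm
  rw [Nat.sub_sub_self hhk]
  simp only [add_comm]

theorem fareyTerm_one_two (m : ℕ) :
    fareyTerm m (1, 2) = 2 * ∑ t ∈ Icc 1 (m / 2), m.choose (2 * t) * m.choose t := by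
  rw [fareyTerm, mul_sum]
  refine sum_congr rfl fun s _ => ?_
  norm_num [mul_comm s 2]
  ring

theorem sum_fareyInterior_fareyTerm (m : ℕ) :
    ∑ p ∈ fareyInterior m, fareyTerm m p =
      2 * ∑ q ∈ ltPairs m, m.choose q.1 * m.choose q.2 := by
  have hmul := sum_fareyInterior_sum_multiples m
    fun a b => m.choose b * (m.choose a + m.choose (b - a))
  have hsub : ∑ q ∈ ltPairs m, m.choose q.2 * m.choose (q.2 - q.1) =
      ∑ q ∈ ltPairs m, m.choose q.2 * m.choose q.1 :=
    sum_ltPairs_sub_fst m fun a b => m.choose b * m.choose a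
  simp only [← Nat.mul_sub] at hmul
  simp only [fareyTerm]
  rw [hmul]
  simp only [mul_add, sum_add_distrib, hsub, two_mul, mul_comm]

theorem two_mul_sum_ltPairs_choose_mul_choose (m : ℕ) :
    2 * ∑ q ∈ ltPairs m, m.choose q.1 * m.choose q.2 + (2 * m).choose m + 2 ^ (m + 1) =
      2 ^ (2 * m) + 2 := by
  have hsq := sq_sum_eq_sum_sq_add_two_mul_sum_lt (Icc 1 m) m.choose
  have hsum := Nat.sum_range_choose m
  have hsumsq := Nat.sum_range_choose_sq m
  rw [sum_range_succ_eq_add_sum_Icc, Nat.choose_zero_right] at hsum hsumsq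
  rw [ltPairs, pow_succ, pow_mul', ← hsum, ← hsumsq]
  linarith [hsq]

/-- Identities for fractions of the standard Farey sequence `𝓕_m`.
The outer sums range over reduced fractions `h/k ∈ 𝓕_m` (coprime pairs with
`1 ≤ h < k ≤ m`) lying in `(0/1, 1/2)` and `(1/2, 1/1)`, respectively. -/
theorem farey_half_binomial_identities (m : ℕ) (hm : 1 < m) :
    ((∑ p ∈ (Finset.Icc 1 m ×ˢ Finset.Icc 1 m).filter
        (fun p => 2 * p.1 < p.2 ∧ Nat.Coprime p.1 p.2),
      ∑ s ∈ Finset.Icc 1 (m / p.2),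
        (m.choose (s * p.2)) *
          ((m.choose (s * p.1)) + (m.choose (s * (p.2 - p.1)))) : ℕ) : ℚ)
      = 2 ^ (2 * m - 1) - 2 ^ m - ((2 * m).choose m : ℚ) / 2
          - (∑ t ∈ Finset.Icc 1 (m / 2), (m.choose (2 * t)) * (m.choose t) : ℕ) + 1 ∧
    ((∑ p ∈ (Finset.Icc 1 m ×ˢ Finset.Icc 1 m).filter
        (fun p => p.2 < 2 * p.1 ∧ p.1 < p.2 ∧ Nat.Coprime p.1 p.2),
      ∑ s ∈ Finset.Icc 1 (m / p.2),
        (m.choose (s * p.2)) *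
          ((m.choose (s * p.1)) + (m.choose (s * (p.2 - p.1)))) : ℕ) : ℚ)
      = 2 ^ (2 * m - 1) - 2 ^ m - ((2 * m).choose m : ℚ) / 2
          - (∑ t ∈ Finset.Icc 1 (m / 2), (m.choose (2 * t)) * (m.choose t) : ℕ) + 1 := by
  change ((∑ p ∈ fareyLowerHalf m, fareyTerm m p : ℕ) : ℚ) = _ ∧
    ((∑ p ∈ fareyUpperHalf m, fareyTerm m p : ℕ) : ℚ) = _
  have hsym := sum_fareyUpperHalf_eq_sum_fareyLowerHalf m (fareyTerm m)
    fun _ _ => fareyTerm_sub_fst m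
  rw [hsym, and_self]
  have hsplit := sum_fareyInterior hm (fareyTerm m)
  rw [sum_fareyInterior_fareyTerm, fareyTerm_one_two, hsym] at hsplit
  have hpairs := two_mul_sum_ltPairs_choose_mul_choose m
  set L := ∑ p ∈ fareyLowerHalf m, fareyTerm m p
  set T := ∑ t ∈ Icc 1 (m / 2), m.choose (2 * t) * m.choose t
  have hcount : (2 * L + 2 * T + (2 * m).choose m + 2 ^ (m + 1) : ℚ) = 2 ^ (2 * m) + 2 := by
    exact_mod_cast (by omega : 2 * L + 2 * T + (2 * m).choose m + 2 ^ (m + 1) = 2 ^ (2 * m) + 2)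
  have hpow : (2 : ℚ) ^ (2 * m) = 2 * 2 ^ (2 * m - 1) := by
    rw [← pow_succ', Nat.sub_add_cancel (by omega)]
  rw [hpow, pow_succ] at hcount
  linarith
end
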